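/- Let H be a reduced double-well type potential, β > 0, and let Φ_β, λ_β be the eigenfunction and eigenvalue of the transfer operator L_β as above. Then 1 < λ_β ≤ 2, Φ_β is constant on each cylinder [0^n 1] and [1^n 0] (n ≥ 1), and: (1) Φ_β|[0^n 1] = ( Σ_{k≥n} λ_β^{−(k−n+1)} e^{−β H_k^1} ) · Φ_β|[10] and Φ_β(0^∞) = e^{−β H_∞^1} (λ_β − 1)^{−1} Φ_β|[10]; (2) Φ_β|[1^n 0] = ( Σ_{k≥n} λ_β^{−(k−n+1)} e^{−β H_k^0} ) · Φ_β|[01] and Φ_β(1^∞) = e^{−β H_∞^0} (λ_β − 1)^{−1} Φ_β|[01]; (3) if H_∞^0 = H_∞^1 = 0, then max{Φ_β(0^∞), Φ_β(1^∞)} = 1. -/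

import Mathlib

open MeasureTheory Filter Topology

/-- The one-sided full shift space on two symbols. -/
abbrev Sig : Type := ℕ → Fin 2

/-- The left shift map. -/
def shft : Sig → Sig := fun x n => x (n + 1)

/-- Concatenation of a symbol with a configuration. -/
def cons2 (i : Fin 2) (x : Sig) : Sig := fun n => match n with
  | 0 => i
  | Nat.succ k => x k

/-- `x` and `y` agree on their first `n` coordinates. -/
def nClose (n : ℕ) (x y : Sig) : Prop := ∀ k, k < n → x k = y k

/-- The `n`-th variation of `H`. -/
noncomputable def Var (H : Sig → ℝ) (n : ℕ) : ℝ :=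
  sSup {d : ℝ | ∃ x y : Sig, nClose n x y ∧ d = |H x - H y|}

/-- `H` has summable variation. -/
def SummableVar (H : Sig → ℝ) : Prop := Summable (fun n : ℕ => Var H (n + 1))

/-- The transfer operator at inverse temperature `β`. -/
noncomputable def transfer (β : ℝ) (H : Sig → ℝ) (Φ : Sig → ℝ) : Sig → ℝ :=
  fun x => Real.exp (-β * H (cons2 0 x)) * Φ (cons2 0 x)
         + Real.exp (-β * H (cons2 1 x)) * Φ (cons2 1 x)

/-- The cylinder set determined by a finite word. -/
def cyl (w : List (Fin 2)) : Set Sig := {x | ∀ i : ℕ, ∀ h : i < w.length, x i = w.get ⟨i, h⟩}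

/-- The fixed point `0^∞`. -/
def zpt : Sig := fun _ => 0

/-- The fixed point `1^∞`. -/
def opt : Sig := fun _ => 1

/-- The minimizing ergodic value of `H`. -/
noncomputable def Hbar (H : Sig → ℝ) : ℝ :=
  sInf {r : ℝ | ∃ μ : Measure Sig, IsProbabilityMeasure μ ∧ μ.map shft = μ ∧ r = ∫ x, H x ∂μ}

/-- A minimizing measure for `H`. -/
def IsMinimizing (H : Sig → ℝ) (μ : Measure Sig) : Prop :=
  IsProbabilityMeasure μ ∧ μ.map shft = μ ∧
  ∀ ν : Measure Sig, IsProbabilityMeasure ν → ν.map shft = ν →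
    ∫ x, H x ∂μ ≤ ∫ x, H x ∂ν

/-- The (topological) support of a measure. -/
def mSupport (μ : Measure Sig) : Set Sig := {x | ∀ U : Set Sig, IsOpen U → x ∈ U → μ U ≠ 0}

/-- The Mather set of `H` : union of supports of minimizing measures. -/
def mather (H : Sig → ℝ) : Set Sig := {x | ∃ μ : Measure Sig, IsMinimizing H μ ∧ x ∈ mSupport μ}

/-- Birkhoff sum of the normalized potential. -/
noncomputable def birk (H : Sig → ℝ) (k : ℕ) (z : Sig) : ℝ :=
  ∑ i ∈ Finset.range k, (H (shft^[i] z) - Hbar H)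

/-- The quantity `S_n^p(x,y)` (an infimum in `EReal`, `+∞` when the defining set is empty). -/
noncomputable def SBar (H : Sig → ℝ) (p n : ℕ) (x y : Sig) : EReal :=
  sInf {s : EReal | ∃ k : ℕ, n ≤ k ∧ ∃ z : Sig, nClose p z x ∧ nClose p (shft^[k] z) y ∧
    s = (birk H k z : EReal)}

/-- The Peierls barrier `h(x,y)`; since `S_n^p(x,y)` is nondecreasing in both `n` and `p`,
the double limit is a double supremum. -/
noncomputable def peierls (H : Sig → ℝ) (x y : Sig) : EReal := ⨆ p : ℕ, ⨆ n : ℕ, SBar H p n x y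

/-- The Lax-Oleinik operator (the two preimages of `y` under the shift are `0y` and `1y`). -/
noncomputable def laxOleinik (H V : Sig → ℝ) : Sig → ℝ :=
  fun y => min (V (cons2 0 y) + H (cons2 0 y)) (V (cons2 1 y) + H (cons2 1 y))

/-- A calibrated sub-action of `H`. -/
def IsCalibrated (H V : Sig → ℝ) : Prop :=
  Continuous V ∧ laxOleinik H V = fun y => V y + Hbar H

/-- Membership in the class `𝕂`. -/
def InK (H V : Sig → ℝ) : Prop :=
  Continuous V ∧ ∀ n : ℕ, 1 ≤ n → Var V n ≤ ∑' k : ℕ, Var H (n + 1 + k)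

/-- A reduced double-well type potential with data `(H_n^0)`, `(H_n^1)` (indexed from `n = 1`). -/
structure ReducedDW (H : Sig → ℝ) (H0 H1 : ℕ → ℝ) : Prop where
  cont : Continuous H
  nonneg : ∀ x, 0 ≤ H x
  svar : SummableVar H
  zero : ∀ x ∈ cyl [0, 0] ∪ cyl [1, 1], H x = 0
  pos0 : ∀ n, 1 ≤ n → 0 < H0 n
  pos1 : ∀ n, 1 ≤ n → 0 < H1 n
  val0 : ∀ n, 1 ≤ n → ∀ x ∈ cyl (0 :: (List.replicate n 1 ++ [0])), H x = H0 n
  val1 : ∀ n, 1 ≤ n → ∀ x ∈ cyl (1 :: (List.replicate n 0 ++ [1])), H x = H1 n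
  bdd0 : ∀ k : ℕ, BddAbove (Set.range fun n : ℕ => |H0 (k + 1) - H0 (k + 1 + n)|)
  bdd1 : ∀ k : ℕ, BddAbove (Set.range fun n : ℕ => |H1 (k + 1) - H1 (k + 1 + n)|)
  sum0 : Summable (fun k : ℕ => ⨆ n : ℕ, |H0 (k + 1) - H0 (k + 1 + n)|)
  sum1 : Summable (fun k : ℕ => ⨆ n : ℕ, |H1 (k + 1) - H1 (k + 1 + n)|)

/-- A double-well type potential with data `a_n^0, a_n^1, b_n^0, b_n^1` (indexed from `n = 1`). -/
structure DW (H : Sig → ℝ) (a0 a1 b0 b1 : ℕ → ℝ) : Prop where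
  cont : Continuous H
  nonneg : ∀ x, 0 ≤ H x
  svar : SummableVar H
  anneg0 : ∀ n, 1 ≤ n → 0 ≤ a0 n
  anneg1 : ∀ n, 1 ≤ n → 0 ≤ a1 n
  bpos0 : ∀ n, 1 ≤ n → 0 < b0 n
  bpos1 : ∀ n, 1 ≤ n → 0 < b1 n
  vala0 : ∀ n, 1 ≤ n → ∀ x ∈ cyl (0 :: (List.replicate n 0 ++ [1])), H x = a0 n
  vala1 : ∀ n, 1 ≤ n → ∀ x ∈ cyl (1 :: (List.replicate n 1 ++ [0])), H x = a1 n
  valb0 : ∀ n, 1 ≤ n → ∀ x ∈ cyl (0 :: (List.replicate n 1 ++ [0])), H x = b0 n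
  valb1 : ∀ n, 1 ≤ n → ∀ x ∈ cyl (1 :: (List.replicate n 0 ++ [1])), H x = b1 n
  suma0 : Summable (fun n : ℕ => ((n + 1 : ℕ) : ℝ) * a0 (n + 1))
  suma1 : Summable (fun n : ℕ => ((n + 1 : ℕ) : ℝ) * a1 (n + 1))
  bddb0 : ∀ k : ℕ, BddAbove (Set.range fun n : ℕ => |b0 (k + 1) - b0 (k + 1 + n)|)
  bddb1 : ∀ k : ℕ, BddAbove (Set.range fun n : ℕ => |b1 (k + 1) - b1 (k + 1 + n)|)
  sumb0 : Summable (fun k : ℕ => ⨆ n : ℕ, |b0 (k + 1) - b0 (k + 1 + n)|)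
  sumb1 : Summable (fun k : ℕ => ⨆ n : ℕ, |b1 (k + 1) - b1 (k + 1 + n)|)

/-- The series `F_β(λ) = Σ_{k≥1} λ^{-k} e^{-β H_k}`. -/
noncomputable def Fser (β : ℝ) (Hs : ℕ → ℝ) (lam : ℝ) : ℝ :=
  ∑' k : ℕ, (lam ^ (k + 1))⁻¹ * Real.exp (-β * Hs (k + 1))

/-- The series `F̃_β(λ) = Σ_{k≥1} k λ^{-k} e^{-β H_k}`. -/
noncomputable def Ftser (β : ℝ) (Hs : ℕ → ℝ) (lam : ℝ) : ℝ :=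
  ∑' k : ℕ, ((k + 1 : ℕ) : ℝ) * (lam ^ (k + 1))⁻¹ * Real.exp (-β * Hs (k + 1))

/-- The data of the Ruelle-Perron-Frobenius solution and Gibbs measure at inverse temperature `β`:
eigenfunction `Φ` (positive, continuous, max 1), eigenvalue `lam`, eigenprobability `ν`,
and the Gibbs measure `μ = Φ ν / ∫ Φ dν`. -/
def GibbsData (H : Sig → ℝ) (β : ℝ) (Φ : Sig → ℝ) (lam : ℝ) (ν μ : Measure Sig) : Prop :=
  Continuous Φ ∧ (∀ x, 0 < Φ x) ∧ IsGreatest (Set.range Φ) 1 ∧ 0 < lam ∧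
  (transfer β H Φ = fun x => lam * Φ x) ∧
  IsProbabilityMeasure ν ∧
  (∀ f : Sig → ℝ, Continuous f → ∫ x, transfer β H f x ∂ν = lam * ∫ x, f x ∂ν) ∧
  μ = (ENNReal.ofReal (∫ x, Φ x ∂ν))⁻¹ • ν.withDensity (fun x => ENNReal.ofReal (Φ x))

/-!
`H(a x)` depends only on `a` and on the first block of `x` (its symbol and length). Pairs with the
same first block are mapped by each branch `x ↦ a x` to such pairs, with equal weights and one
more coordinate in common, so iterating the eigen-equation bounds the relative difference
`|Φ x - Φ y| / Φ x` by the oscillation of `Φ` at arbitrarily fine scales: `Φ` is constant on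
such classes, in particular on `[j i]`. On `[iⁿ j]` the eigen-equation reads
`λ Φ(x) = Φ(i x) + e^{-β Hₙ} Φ|[j i]`; iterating it gives the series, the remainder
`λ⁻ᵐ Φ(iᵐ x)` vanishing since `λ > 1`. At `i^∞` it reads `(λ - 1) Φ(i^∞) = e^{-β H(j i^∞)} Φ|[j i]`,
which gives `λ > 1`, and `H(j i^∞) = H_∞` by continuity. When `H_∞ = 0` the same series without the
damping factors `e^{-β Hₖ} ≤ 1` sums to `Φ(i^∞)`, so `Φ` attains its maximum at a fixed point.
-/

theorem exists_nClose_abs_sub_lt {f : Sig → ℝ} (hf : Continuous f) {ε : ℝ} (hε : 0 < ε) :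
    ∃ N, ∀ x y, nClose N x y → |f x - f y| < ε := by
  -- Mathlib puts no uniform structure on `Fin 2`; the discrete one induces its topology.
  let _ : UniformSpace (Fin 2) := ⊥
  have hU := CompactSpace.uniformContinuous_of_continuous hf (Metric.dist_mem_uniformity hε)
  rw [Filter.mem_map, Pi.uniformity, Filter.mem_iInf'] at hU
  obtain ⟨I, hI, V, hV, -, hUV, -⟩ := hU
  obtain ⟨B, hB⟩ := hI.bddAbove
  refine ⟨B + 1, fun x y hxy => ?_⟩
  have hmem : (x, y) ∈ ⋂ i ∈ I, V i := by
    refine Set.mem_biInter fun i hi => ?_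
    obtain ⟨W, hW, hWV⟩ := Filter.mem_comap.1 (hV i)
    apply hWV
    show (x i, y i) ∈ W
    rw [hxy i (Nat.lt_succ_of_le (hB hi))]
    exact refl_mem_uniformity hW
  rw [← hUV] at hmem
  simpa [Real.dist_eq] using hmem

@[simp] theorem cons2_zero (i : Fin 2) (x : Sig) : cons2 i x 0 = i := rfl

@[simp] theorem cons2_succ (i : Fin 2) (x : Sig) (k : ℕ) : cons2 i x (k + 1) = x k := rfl

theorem continuous_cons2 (i : Fin 2) : Continuous (cons2 i) :=
  continuous_pi fun k => by
    cases k with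
    | zero => exact continuous_const
    | succ k => exact continuous_apply k

theorem nClose.cons2 {k : ℕ} {x y : Sig} (h : nClose k x y) (i : Fin 2) :
    nClose (k + 1) (cons2 i x) (cons2 i y) := by
  rintro (_ | m) hm
  · rfl
  · exact h m (by omega)

theorem cons2_mem_cyl_cons {a : Fin 2} {w : List (Fin 2)} {x : Sig} :
    cons2 a x ∈ cyl (a :: w) ↔ x ∈ cyl w := by
  constructor
  · intro h k hk
    exact h (k + 1) (by simpa using hk)
  · rintro h (_ | k) hk
    · rfl
    · exact h k (by simpa using hk)

theorem mem_cyl_replicate_append {i j : Fin 2} {n : ℕ} {x : Sig} :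
    x ∈ cyl (List.replicate n i ++ [j]) ↔ (∀ k < n, x k = i) ∧ x n = j := by
  simp only [cyl, List.length_append, List.length_replicate,
    List.length_singleton, List.get_eq_getElem]
  constructor
  · intro h
    refine ⟨fun k hk => ?_, by simpa using h n (by omega)⟩
    simpa [List.getElem_append_left (by simpa using hk : k < (List.replicate n i).length)]
      using h k (by omega)
  · rintro ⟨hlt, hn⟩ k hk
    rcases Nat.lt_succ_iff_lt_or_eq.1 hk with hk | rfl
    · simp [List.getElem_append_left (by simpa using hk : k < (List.replicate n i).length),
        hlt k hk]
    · simp [hn]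

theorem transfer_apply_of_ne {β : ℝ} {H Φ : Sig → ℝ} {i j : Fin 2} (hij : i ≠ j) (x : Sig) :
    transfer β H Φ x = Real.exp (-β * H (cons2 i x)) * Φ (cons2 i x)
      + Real.exp (-β * H (cons2 j x)) * Φ (cons2 j x) := by
  fin_cases i <;> fin_cases j <;> simp_all [transfer, add_comm]

theorem cons2_const (i : Fin 2) : cons2 i (fun _ => i) = fun _ => i := by
  funext k; cases k <;> rfl

section Invariance

variable {H Φ : Sig → ℝ} {β lam : ℝ} {R : Sig → Sig → Prop}

theorem abs_sub_le_of_rel_of_transfer_eq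
    (hR : ∀ i x y, R x y → R (cons2 i x) (cons2 i y))
    (hH : ∀ i x y, R x y → H (cons2 i x) = H (cons2 i y))
    (hlam : 0 < lam) (heig : transfer β H Φ = fun x => lam * Φ x)
    {δ : ℝ} {N : ℕ} (hN : ∀ x y, nClose N x y → |Φ x - Φ y| ≤ δ * Φ x) :
    ∀ m k x y, R x y → nClose k x y → N ≤ m + k → |Φ x - Φ y| ≤ δ * Φ x := by
  intro m
  induction m with
  | zero => exact fun k x y _ hxy hNk => hN x y fun l hl => hxy l (by omega)
  | succ m ih =>
    intro k x y hRxy hxy hNk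
    have hx := congrFun heig x
    have hy := congrFun heig y
    simp only [transfer, ← hH 0 x y hRxy, ← hH 1 x y hRxy] at hx hy
    set a₀ := Real.exp (-β * H (cons2 0 x))
    set a₁ := Real.exp (-β * H (cons2 1 x))
    have h₀ := ih (k + 1) _ _ (hR 0 x y hRxy) (hxy.cons2 0) (by omega)
    have h₁ := ih (k + 1) _ _ (hR 1 x y hRxy) (hxy.cons2 1) (by omega)
    refine le_of_mul_le_mul_left ?_ hlam
    calc lam * |Φ x - Φ y|
        = |a₀ * (Φ (cons2 0 x) - Φ (cons2 0 y)) + a₁ * (Φ (cons2 1 x) - Φ (cons2 1 y))| := by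
          rw [← abs_of_pos hlam, ← abs_mul]
          congr 1
          linear_combination hy - hx
      _ ≤ a₀ * |Φ (cons2 0 x) - Φ (cons2 0 y)| + a₁ * |Φ (cons2 1 x) - Φ (cons2 1 y)| := by
          refine (abs_add_le _ _).trans_eq ?_
          rw [abs_mul, abs_mul, abs_of_pos (Real.exp_pos _), abs_of_pos (Real.exp_pos _)]
      _ ≤ a₀ * (δ * Φ (cons2 0 x)) + a₁ * (δ * Φ (cons2 1 x)) := by gcongr
      _ = lam * (δ * Φ x) := by linear_combination δ * hx

theorem eq_of_rel_of_transfer_eq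
    (hR : ∀ i x y, R x y → R (cons2 i x) (cons2 i y))
    (hH : ∀ i x y, R x y → H (cons2 i x) = H (cons2 i y))
    (hΦc : Continuous Φ) (hΦpos : ∀ x, 0 < Φ x) (hlam : 0 < lam)
    (heig : transfer β H Φ = fun x => lam * Φ x) {x y : Sig} (hxy : R x y) : Φ x = Φ y := by
  obtain ⟨z₀, -, hz₀⟩ := isCompact_univ.exists_isMinOn Set.univ_nonempty hΦc.continuousOn
  have hrel : ∀ δ > 0, |Φ x - Φ y| ≤ δ * Φ x := by
    intro δ hδ
    obtain ⟨N, hN⟩ := exists_nClose_abs_sub_lt hΦc (mul_pos hδ (hΦpos z₀))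
    refine abs_sub_le_of_rel_of_transfer_eq hR hH hlam heig (N := N) (fun x y hxy => ?_)
      N 0 x y hxy (fun _ h => absurd h (Nat.not_lt_zero _)) le_rfl
    exact (hN x y hxy).le.trans (mul_le_mul_of_nonneg_left (hz₀ (Set.mem_univ x)) hδ.le)
  refine eq_of_forall_dist_le fun ε hε => ?_
  simpa [Real.dist_eq, div_mul_cancel₀ _ (hΦpos x).ne'] using
    hrel (ε / Φ x) (div_pos hε (hΦpos x))

end Invariance

structure IsWell (H : Sig → ℝ) (i j : Fin 2) (Hs : ℕ → ℝ) : Prop where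
  ne : i ≠ j
  apply_cons2_self : ∀ x, x 0 = i → H (cons2 i x) = 0
  apply_cons2_block : ∀ m, 1 ≤ m → ∀ x ∈ cyl (List.replicate m i ++ [j]), H (cons2 j x) = Hs m

def SameFirstBlock (x y : Sig) : Prop :=
  ∃ i j : Fin 2, i ≠ j ∧ ∃ l, 1 ≤ l ∧
    x ∈ cyl (List.replicate l i ++ [j]) ∧ y ∈ cyl (List.replicate l i ++ [j])

theorem cons2_mem_cyl_pair {a i : Fin 2} {x : Sig} (hx : x 0 = i) : cons2 a x ∈ cyl [a, i] :=
  cons2_mem_cyl_cons.2 ((mem_cyl_replicate_append (i := a) (n := 0)).2 ⟨nofun, hx⟩)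

theorem SameFirstBlock.cons2 {x y : Sig} (h : SameFirstBlock x y) (a : Fin 2) :
    SameFirstBlock (cons2 a x) (cons2 a y) := by
  obtain ⟨i, j, hij, l, hl, hx, hy⟩ := h
  by_cases hai : a = i
  · subst hai
    exact ⟨a, j, hij, l + 1, by omega, cons2_mem_cyl_cons.2 hx, cons2_mem_cyl_cons.2 hy⟩
  · exact ⟨a, i, hai, 1, le_rfl, cons2_mem_cyl_pair ((mem_cyl_replicate_append.1 hx).1 0 hl),
      cons2_mem_cyl_pair ((mem_cyl_replicate_append.1 hy).1 0 hl)⟩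

theorem IsWell.sameFirstBlock {H : Sig → ℝ} {i j : Fin 2} {Hs : ℕ → ℝ} (hW : IsWell H i j Hs)
    {x : Sig} (hx : x 0 = i) : SameFirstBlock (cons2 j x) (cons2 j fun _ => i) :=
  ⟨j, i, hW.ne.symm, 1, le_rfl, cons2_mem_cyl_pair hx, cons2_mem_cyl_pair rfl⟩

namespace ReducedDW

variable {H : Sig → ℝ} {H0 H1 : ℕ → ℝ}

theorem isWell_zero (hR : ReducedDW H H0 H1) : IsWell H 0 1 H1 where
  ne := by decide
  apply_cons2_self _ hx := hR.zero _ (Or.inl (cons2_mem_cyl_pair hx))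
  apply_cons2_block m hm _ hx := hR.val1 m hm _ (cons2_mem_cyl_cons.2 hx)

theorem isWell_one (hR : ReducedDW H H0 H1) : IsWell H 1 0 H0 where
  ne := by decide
  apply_cons2_self _ hx := hR.zero _ (Or.inr (cons2_mem_cyl_pair hx))
  apply_cons2_block m hm _ hx := hR.val0 m hm _ (cons2_mem_cyl_cons.2 hx)

theorem apply_cons2_eq_of_sameFirstBlock (hR : ReducedDW H H0 H1) {x y : Sig}
    (h : SameFirstBlock x y) (a : Fin 2) : H (cons2 a x) = H (cons2 a y) := by
  obtain ⟨i, j, hij, l, hl, hx, hy⟩ := h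
  obtain ⟨Hs, hW⟩ : ∃ Hs, IsWell H i j Hs := by
    fin_cases i <;> fin_cases j
    exacts [absurd rfl hij, ⟨H1, hR.isWell_zero⟩, ⟨H0, hR.isWell_one⟩, absurd rfl hij]
  by_cases hai : a = i
  · subst hai
    rw [hW.apply_cons2_self x ((mem_cyl_replicate_append.1 hx).1 0 hl),
      hW.apply_cons2_self y ((mem_cyl_replicate_append.1 hy).1 0 hl)]
  · obtain rfl : a = j := by omega
    rw [hW.apply_cons2_block l hl x hx, hW.apply_cons2_block l hl y hy]

theorem eq_of_sameFirstBlock (hR : ReducedDW H H0 H1) {Φ : Sig → ℝ} {β lam : ℝ}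
    (hΦc : Continuous Φ) (hΦpos : ∀ x, 0 < Φ x) (hlam : 0 < lam)
    (heig : transfer β H Φ = fun x => lam * Φ x) {x y : Sig} (h : SameFirstBlock x y) :
    Φ x = Φ y :=
  eq_of_rel_of_transfer_eq (fun a _ _ h => h.cons2 a)
    (fun a _ _ h => hR.apply_cons2_eq_of_sameFirstBlock h a) hΦc hΦpos hlam heig h

end ReducedDW

namespace IsWell

variable {H Φ : Sig → ℝ} {β lam : ℝ} {i j : Fin 2} {Hs : ℕ → ℝ}

theorem sub_one_mul_apply_const (hW : IsWell H i j Hs)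
    (heig : transfer β H Φ = fun x => lam * Φ x) :
    (lam - 1) * Φ (fun _ => i) =
      Real.exp (-β * H (cons2 j fun _ => i)) * Φ (cons2 j fun _ => i) := by
  have h := congrFun heig fun _ => i
  rw [transfer_apply_of_ne hW.ne, hW.apply_cons2_self _ rfl, cons2_const, mul_zero,
    Real.exp_zero, one_mul] at h
  linear_combination -h

theorem one_lt (hW : IsWell H i j Hs) (heig : transfer β H Φ = fun x => lam * Φ x)
    (hΦpos : ∀ x, 0 < Φ x) : 1 < lam := by
  have h := hW.sub_one_mul_apply_const heig
  have hpos : 0 < (lam - 1) * Φ (fun _ => i) := h ▸ mul_pos (Real.exp_pos _) (hΦpos _)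
  linarith [(pos_iff_pos_of_mul_pos hpos).2 (hΦpos _)]

theorem apply_cons2_const (hW : IsWell H i j Hs) (hH : Continuous H) {Hinf : ℝ}
    (hinf : Tendsto Hs atTop (𝓝 Hinf)) : H (cons2 j fun _ => i) = Hinf := by
  let p : ℕ → Sig := fun m k => if k < m then i else j
  have hp : Tendsto p atTop (𝓝 fun _ => i) :=
    tendsto_pi_nhds.2 fun k => tendsto_const_nhds.congr'
      ((Filter.eventually_gt_atTop k).mono fun m hm => (if_pos hm).symm)
  have hHp : ∀ᶠ m in atTop, Hs m = H (cons2 j (p m)) :=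
    (Filter.eventually_ge_atTop 1).mono fun m hm => (hW.apply_cons2_block m hm _
      (mem_cyl_replicate_append.2 ⟨fun k hk => if_pos hk, if_neg (lt_irrefl m)⟩)).symm
  exact tendsto_nhds_unique
    ((hH.comp (continuous_cons2 j)).continuousAt.tendsto.comp hp) (hinf.congr' hHp)

theorem apply_const_eq (hW : IsWell H i j Hs) (heig : transfer β H Φ = fun x => lam * Φ x)
    (hlam : 1 < lam) (hH : Continuous H) {Hinf : ℝ} (hinf : Tendsto Hs atTop (𝓝 Hinf)) :
    Φ (fun _ => i) = Real.exp (-β * Hinf) / (lam - 1) * Φ (cons2 j fun _ => i) := by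
  rw [div_mul_eq_mul_div, eq_div_iff (sub_pos.2 hlam).ne', mul_comm,
    hW.sub_one_mul_apply_const heig, hW.apply_cons2_const hH hinf]

theorem mul_eq_add_of_mem_cyl (hW : IsWell H i j Hs)
    (heig : transfer β H Φ = fun x => lam * Φ x)
    (hA : ∀ x, x 0 = i → Φ (cons2 j x) = Φ (cons2 j fun _ => i))
    {m : ℕ} (hm : 1 ≤ m) {z : Sig} (hz : z ∈ cyl (List.replicate m i ++ [j])) :
    lam * Φ z = Φ (cons2 i z) + Real.exp (-β * Hs m) * Φ (cons2 j fun _ => i) := by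
  have hz0 : z 0 = i := (mem_cyl_replicate_append.1 hz).1 0 hm
  rw [← congrFun heig z, transfer_apply_of_ne hW.ne, hW.apply_cons2_self z hz0,
    hW.apply_cons2_block m hm z hz, hA z hz0, mul_zero, Real.exp_zero, one_mul]

theorem hasSum_of_mem_cyl (hW : IsWell H i j Hs) (heig : transfer β H Φ = fun x => lam * Φ x)
    (hA : ∀ x, x 0 = i → Φ (cons2 j x) = Φ (cons2 j fun _ => i))
    (hΦpos : ∀ x, 0 < Φ x) (hΦbdd : BddAbove (Set.range Φ)) (hlam : 1 < lam)
    {n : ℕ} (hn : 1 ≤ n) {x : Sig} (hx : x ∈ cyl (List.replicate n i ++ [j])) :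
    HasSum (fun k => (lam ^ (k + 1))⁻¹ * Real.exp (-β * Hs (n + k)) * Φ (cons2 j fun _ => i))
      (Φ x) := by
  have hlam₀ : 0 < lam := zero_lt_one.trans hlam
  set A := Φ (cons2 j fun _ => i)
  set z : ℕ → Sig := fun k => (cons2 i)^[k] x
  have hz : ∀ k, z k ∈ cyl (List.replicate (n + k) i ++ [j]) := by
    intro k
    induction k with
    | zero => exact hx
    | succ k ih =>
      simp only [z, Function.iterate_succ_apply']
      exact cons2_mem_cyl_cons.2 ih
  have hpartial : ∀ m,
      ∑ k ∈ Finset.range m, (lam ^ (k + 1))⁻¹ * Real.exp (-β * Hs (n + k)) * A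
        = Φ x - (lam ^ m)⁻¹ * Φ (z m) := by
    intro m
    induction m with
    | zero => simp [z]
    | succ m ih =>
      have hstep := hW.mul_eq_add_of_mem_cyl heig hA (by omega) (hz m)
      rw [Finset.sum_range_succ, ih, show z (m + 1) = cons2 i (z m) from
        Function.iterate_succ_apply' _ _ _, eq_sub_of_add_eq hstep.symm]
      field_simp
      ring
  have hrem : Tendsto (fun m => (lam ^ m)⁻¹ * Φ (z m)) atTop (𝓝 0) := by
    obtain ⟨C, hC⟩ := hΦbdd
    have hpow := tendsto_inv_atTop_zero.comp (tendsto_pow_atTop_atTop_of_one_lt hlam)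
    refine squeeze_zero (fun m => ?_) (fun m => ?_) (zero_mul C ▸ hpow.mul_const C)
    · exact mul_nonneg (inv_nonneg.2 (pow_nonneg hlam₀.le _)) (hΦpos _).le
    · exact mul_le_mul_of_nonneg_left (hC ⟨_, rfl⟩) (inv_nonneg.2 (pow_nonneg hlam₀.le _))
  refine (hasSum_iff_tendsto_nat_of_nonneg (fun k => ?_) _).2 ?_
  · exact mul_nonneg (mul_nonneg (inv_nonneg.2 (pow_nonneg hlam₀.le _)) (Real.exp_pos _).le)
      (hΦpos _).le
  have hlim := tendsto_const_nhds (x := Φ x) |>.sub hrem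
  rw [sub_zero] at hlim
  exact hlim.congr fun m => (hpartial m).symm

theorem eq_tsum_mul_of_mem_cyl (hW : IsWell H i j Hs)
    (heig : transfer β H Φ = fun x => lam * Φ x)
    (hA : ∀ x, x 0 = i → Φ (cons2 j x) = Φ (cons2 j fun _ => i))
    (hΦpos : ∀ x, 0 < Φ x) (hΦbdd : BddAbove (Set.range Φ)) (hlam : 1 < lam)
    {n : ℕ} (hn : 1 ≤ n) {x : Sig} (hx : x ∈ cyl (List.replicate n i ++ [j])) :
    Φ x = (∑' k, (lam ^ (k + 1))⁻¹ * Real.exp (-β * Hs (n + k))) * Φ (cons2 j fun _ => i) := by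
  rw [← tsum_mul_right]
  exact (hW.hasSum_of_mem_cyl heig hA hΦpos hΦbdd hlam hn hx).tsum_eq.symm

theorem le_apply_const_of_mem_cyl (hW : IsWell H i j Hs)
    (heig : transfer β H Φ = fun x => lam * Φ x)
    (hA : ∀ x, x 0 = i → Φ (cons2 j x) = Φ (cons2 j fun _ => i))
    (hΦpos : ∀ x, 0 < Φ x) (hΦbdd : BddAbove (Set.range Φ)) (hlam : 1 < lam)
    (hβ : 0 ≤ β) (hHs : ∀ m, 1 ≤ m → 0 ≤ Hs m) (hfree : H (cons2 j fun _ => i) = 0)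
    {n : ℕ} (hn : 1 ≤ n) {x : Sig} (hx : x ∈ cyl (List.replicate n i ++ [j])) :
    Φ x ≤ Φ (fun _ => i) := by
  set A := Φ (cons2 j fun _ => i)
  have hlam₀ : 0 < lam := zero_lt_one.trans hlam
  have hconst : Φ (fun _ => i) = A / (lam - 1) := by
    have h := hW.sub_one_mul_apply_const heig
    rw [hfree, mul_zero, Real.exp_zero, one_mul] at h
    rw [eq_div_iff (sub_pos.2 hlam).ne', mul_comm]
    exact h
  have hgeo : HasSum (fun k => (lam ^ (k + 1))⁻¹ * A) (Φ fun _ => i) := by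
    have h := (hasSum_geometric_of_lt_one (inv_nonneg.2 hlam₀.le)
      (inv_lt_one_of_one_lt₀ hlam)).mul_left (lam⁻¹ * A)
    rw [show lam⁻¹ * A * (1 - lam⁻¹)⁻¹ = A / (lam - 1) by field_simp, ← hconst] at h
    exact h.congr_fun fun k => by rw [← inv_pow, pow_succ]; ring
  refine hasSum_le (fun k => ?_) (hW.hasSum_of_mem_cyl heig hA hΦpos hΦbdd hlam hn hx) hgeo
  have hexp : Real.exp (-β * Hs (n + k)) ≤ 1 :=
    Real.exp_le_one_iff.2 (by nlinarith [hHs (n + k) (by omega)])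
  have hterm := mul_le_mul_of_nonneg_right
    (mul_le_mul_of_nonneg_left hexp (inv_nonneg.2 (pow_nonneg hlam₀.le (k + 1))))
    (hΦpos (cons2 j fun _ => i)).le
  rwa [mul_one] at hterm

end IsWell

theorem le_two_of_transfer_eq {H Φ : Sig → ℝ} {β lam : ℝ} (hH : ∀ x, 0 ≤ H x) (hβ : 0 ≤ β)
    (hΦ : IsGreatest (Set.range Φ) 1) (heig : transfer β H Φ = fun x => lam * Φ x) :
    lam ≤ 2 := by
  obtain ⟨x, hx⟩ := hΦ.1
  have hterm : ∀ i, Real.exp (-β * H (cons2 i x)) * Φ (cons2 i x) ≤ 1 := fun i =>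
    (mul_le_of_le_one_right (Real.exp_pos _).le (hΦ.2 ⟨_, rfl⟩)).trans
      (Real.exp_le_one_iff.2 (by nlinarith [hH (cons2 i x)]))
  have h := congrFun heig x
  rw [transfer, hx, mul_one] at h
  linarith [hterm 0, hterm 1]

theorem eq_zpt_or_eq_opt_or_mem_cyl (x : Sig) :
    x = zpt ∨ x = opt ∨ ∃ n, 1 ≤ n ∧
      (x ∈ cyl (List.replicate n 0 ++ [1]) ∨ x ∈ cyl (List.replicate n 1 ++ [0])) := by
  by_cases hconst : ∀ k, x k = x 0
  · have hx : x = fun _ => x 0 := funext hconst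
    rcases (by omega : x 0 = 0 ∨ x 0 = 1) with h | h
    · exact Or.inl (hx.trans (by rw [h]; rfl))
    · exact Or.inr (Or.inl (hx.trans (by rw [h]; rfl)))
  push Not at hconst
  set n := Nat.find hconst
  have hn : x n ≠ x 0 := Nat.find_spec hconst
  have hbefore : ∀ k < n, x k = x 0 := fun k hk => not_not.1 (Nat.find_min hconst hk)
  refine Or.inr (Or.inr ⟨n, Nat.one_le_iff_ne_zero.2 fun h0 => hn (by rw [h0]), ?_⟩)
  rcases (by omega : x 0 = 0 ∨ x 0 = 1) with h | h
  · exact Or.inl (mem_cyl_replicate_append.2 ⟨fun k hk => (hbefore k hk).trans h, by omega⟩)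
  · exact Or.inr (mem_cyl_replicate_append.2 ⟨fun k hk => (hbefore k hk).trans h, by omega⟩)

/-- `1 < λ_β ≤ 2`, and explicit formulas for the eigenfunction `Φ_β` on the
cylinders `[0^n 1]`, `[1^n 0]` and at the fixed points, for a reduced double-well type
potential. -/
theorem stmt_10 (H : Sig → ℝ) (H0 H1 : ℕ → ℝ) (hR : ReducedDW H H0 H1)
    (Hinf0 Hinf1 : ℝ)
    (hinf0 : Tendsto H0 atTop (𝓝 Hinf0)) (hinf1 : Tendsto H1 atTop (𝓝 Hinf1))
    (β : ℝ) (hβ : 0 < β) (Φ : Sig → ℝ) (lam : ℝ)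
    (hΦc : Continuous Φ) (hΦpos : ∀ x, 0 < Φ x) (hΦmax : IsGreatest (Set.range Φ) 1)
    (hlam : 0 < lam) (heig : transfer β H Φ = fun x => lam * Φ x) :
    (1 < lam ∧ lam ≤ 2) ∧
    (∀ n : ℕ, 1 ≤ n → ∀ x ∈ cyl (List.replicate n 0 ++ [1]),
      Φ x = (∑' j : ℕ, (lam ^ (j + 1))⁻¹ * Real.exp (-β * H1 (n + j))) * Φ (cons2 1 zpt)) ∧
    Φ zpt = Real.exp (-β * Hinf1) / (lam - 1) * Φ (cons2 1 zpt) ∧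
    (∀ n : ℕ, 1 ≤ n → ∀ x ∈ cyl (List.replicate n 1 ++ [0]),
      Φ x = (∑' j : ℕ, (lam ^ (j + 1))⁻¹ * Real.exp (-β * H0 (n + j))) * Φ (cons2 0 opt)) ∧
    Φ opt = Real.exp (-β * Hinf0) / (lam - 1) * Φ (cons2 0 opt) ∧
    (Hinf0 = 0 → Hinf1 = 0 → max (Φ zpt) (Φ opt) = 1) := by
  have W₀ := hR.isWell_zero
  have W₁ := hR.isWell_one
  have hΦbdd : BddAbove (Set.range Φ) := ⟨1, hΦmax.2⟩
  have hlam1 : 1 < lam := W₀.one_lt heig hΦpos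
  have hA : ∀ {i j Hs}, IsWell H i j Hs → ∀ x, x 0 = i →
      Φ (cons2 j x) = Φ (cons2 j fun _ => i) := fun hW _ hx =>
    hR.eq_of_sameFirstBlock hΦc hΦpos hlam heig (hW.sameFirstBlock hx)
  refine ⟨⟨hlam1, le_two_of_transfer_eq hR.nonneg hβ.le hΦmax heig⟩,
    fun n hn x hx => W₀.eq_tsum_mul_of_mem_cyl heig (hA W₀) hΦpos hΦbdd hlam1 hn hx,
    W₀.apply_const_eq heig hlam1 hR.cont hinf1,
    fun n hn x hx => W₁.eq_tsum_mul_of_mem_cyl heig (hA W₁) hΦpos hΦbdd hlam1 hn hx,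
    W₁.apply_const_eq heig hlam1 hR.cont hinf0, fun h₀ h₁ => ?_⟩
  subst h₀ h₁
  have hle : ∀ x, Φ x ≤ max (Φ zpt) (Φ opt) := by
    intro x
    rcases eq_zpt_or_eq_opt_or_mem_cyl x with rfl | rfl | ⟨n, hn, hx | hx⟩
    · exact le_max_left _ _
    · exact le_max_right _ _
    · exact (W₀.le_apply_const_of_mem_cyl heig (hA W₀) hΦpos hΦbdd hlam1 hβ.le
        (fun m hm => (hR.pos1 m hm).le) (W₀.apply_cons2_const hR.cont hinf1) hn hx).trans
        (le_max_left _ _)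
    · exact (W₁.le_apply_const_of_mem_cyl heig (hA W₁) hΦpos hΦbdd hlam1 hβ.le
        (fun m hm => (hR.pos0 m hm).le) (W₁.apply_cons2_const hR.cont hinf0) hn hx).trans
        (le_max_right _ _)
  obtain ⟨x, hx⟩ := hΦmax.1
  exact le_antisymm (max_le (hΦmax.2 ⟨_, rfl⟩) (hΦmax.2 ⟨_, rfl⟩)) (hx ▸ hle x)
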